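/- arXiv:2507.03451 — 4 statements merged into one kernel-verified Lean document; each statement's English description precedes it below -/
import Mathlib

section
/- For every θ ∈ (0,π), the partial sums ∑_{l=1}^{N} (−(l+1)/(l(l+2))) · sin((l+1)θ)/sin θ converge as N → ∞ to −(π − θ) cos θ / (2 sin θ) + 1/4. -/
/-!
Partial fractions, `(l + 1) / (l (l + 2)) = (1 / l + 1 / (l + 2)) / 2`, together with the
addition formulas for `sin ((l + 1) θ)` expanded around `l θ` and around `(l + 2) θ`, split the
summand into `cot θ` times two shifted copies of the sawtooth series `∑ sin (l θ) / l` plus a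
telescoping series of `cos (l θ) / l`. The sawtooth series sums to `(π - θ) / 2`: it is the
imaginary part of `∑ e^{i l θ} / l`, which converges by Dirichlet's test and, by Abel's limit
theorem, to `-log (1 - e^{i θ})`, whose argument is `(θ - π) / 2`.
-/

open Filter Finset Topology

lemma Real.sin_half_pos {θ : ℝ} (hθ : θ ∈ Set.Ioo 0 (2 * Real.pi)) : 0 < Real.sin (θ / 2) :=
  Real.sin_pos_of_pos_of_lt_pi (by linarith [hθ.1]) (by linarith [hθ.2])

namespace Complex

lemma one_sub_exp_mul_I (θ : ℝ) :
    1 - exp (θ * I) = ↑(2 * Real.sin (θ / 2)) * exp (↑((θ - Real.pi) / 2) * I) := by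
  set e := exp (θ / 2 * I)
  have hsq : exp (θ * I) = e ^ 2 := by rw [← exp_nat_mul]; ring_nf
  have hpi : exp (↑((θ - Real.pi) / 2) * I) = e / I := by
    rw [← congrArg (e / ·) exp_pi_div_two_mul_I, ← exp_sub]; push_cast; ring_nf
  have hinv : exp (-(θ / 2) * I) * e = 1 := by rw [← exp_add]; ring_nf; exact exp_zero
  rw [hsq, hpi, div_I, ofReal_mul, ofReal_sin, sin]
  push_cast
  linear_combination (-1 : ℂ) * hinv + (exp (-(θ / 2) * I) - e) * e * I_sq

lemma arg_one_sub_exp_mul_I {θ : ℝ} (hθ : θ ∈ Set.Ioo 0 (2 * Real.pi)) :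
    arg (1 - exp (θ * I)) = (θ - Real.pi) / 2 := by
  rw [one_sub_exp_mul_I, arg_real_mul _ (mul_pos two_pos (Real.sin_half_pos hθ)), arg_exp_mul_I,
    toIocMod_eq_self]
  constructor <;> linarith [hθ.1, hθ.2, Real.pi_pos]

lemma exp_mul_I_ne_one {θ : ℝ} (hθ : θ ∈ Set.Ioo 0 (2 * Real.pi)) : exp (θ * I) ≠ 1 := by
  rw [ne_comm, ← sub_ne_zero, one_sub_exp_mul_I]
  exact mul_ne_zero (ofReal_ne_zero.2 (mul_pos two_pos (Real.sin_half_pos hθ)).ne')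
    (exp_ne_zero _)

section ClosedUnitDisc

variable {z : ℂ} (hz : ‖z‖ ≤ 1) (hz1 : z ≠ 1)
include hz hz1

lemma one_sub_mem_slitPlane_of_norm_le_one : 1 - z ∈ slitPlane := by
  refine mem_slitPlane_iff.2 (Or.inl ?_)
  rw [sub_re, one_re, sub_pos]
  by_contra! hre
  have habs : |z.re| = ‖z‖ :=
    le_antisymm (abs_re_le_norm z) (by rw [abs_of_pos (by linarith)]; linarith)
  exact hz1 (ext (by rw [one_re]; linarith [re_le_norm z])
    (by rw [one_im]; exact abs_re_eq_norm.1 habs))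

lemma norm_sum_range_pow_succ_le (n : ℕ) :
    ‖∑ i ∈ range n, z ^ (i + 1)‖ ≤ 2 / ‖1 - z‖ := by
  have hgeom : ∑ i ∈ range n, z ^ (i + 1) = z * (1 - z ^ n) / (1 - z) := by
    rw [eq_div_iff (sub_ne_zero.2 hz1.symm), ← geom_sum_mul_neg, ← mul_assoc, mul_sum]
    simp only [pow_succ']
  have hnum : ‖z * (1 - z ^ n)‖ ≤ 2 := calc
    ‖z * (1 - z ^ n)‖ ≤ 1 * (‖(1 : ℂ)‖ + ‖z ^ n‖) := by
      rw [norm_mul]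
      gcongr
      exact norm_sub_le _ _
    _ ≤ 2 := by rw [norm_one, norm_pow]; linarith [pow_le_one₀ (n := n) (norm_nonneg z) hz]
  rw [hgeom, norm_div]
  gcongr

lemma cauchySeq_sum_range_pow_div : CauchySeq fun n => ∑ i ∈ range n, z ^ i / i := by
  have hanti : Antitone fun n : ℕ => ((n : ℝ) + 1)⁻¹ := fun a b hab => by
    simp only
    gcongr
  have hzero : Tendsto (fun n : ℕ => ((n : ℝ) + 1)⁻¹) atTop (𝓝 0) := by
    simpa using tendsto_one_div_add_atTop_nhds_zero_nat (𝕜 := ℝ)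
  have hdirichlet := hanti.cauchySeq_series_mul_of_tendsto_zero_of_bounded hzero
    (norm_sum_range_pow_succ_le hz hz1)
  rw [← cauchySeq_shift 1]
  convert hdirichlet using 2 with n
  rw [sum_range_succ']
  simp [div_eq_inv_mul]

-- The `i = 0` term is `1 / 0 = 0`.
theorem tendsto_sum_range_pow_div :
    Tendsto (fun n => ∑ i ∈ range n, z ^ i / i) atTop (𝓝 (-log (1 - z))) := by
  obtain ⟨T, hT⟩ := cauchySeq_tendsto_of_complete (cauchySeq_sum_range_pow_div hz hz1)
  have hlog : Tendsto (fun x : ℝ => -log (1 - z * x)) (𝓝[<] 1) (𝓝 (-log (1 - z))) := by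
    have hcont : ContinuousAt (fun x : ℝ => -log (1 - z * x)) 1 :=
      ((continuousAt_const.sub (continuousAt_const.mul continuous_ofReal.continuousAt)).clog
        (by simpa using one_sub_mem_slitPlane_of_norm_le_one hz hz1)).neg
    simpa using hcont.tendsto.mono_left nhdsWithin_le_nhds
  have hseries : (fun x : ℝ => -log (1 - z * x)) =ᶠ[𝓝[<] 1]
      fun x => ∑' n : ℕ, z ^ n / n * (x : ℂ) ^ n := by
    filter_upwards [Ioo_mem_nhdsLT (show (-1 : ℝ) < 1 by norm_num)] with x hx
    have hzx : ‖z * x‖ < 1 := by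
      rw [norm_mul, norm_real, Real.norm_eq_abs]
      exact (mul_le_of_le_one_left (abs_nonneg x) hz).trans_lt (abs_lt.2 hx)
    rw [← (hasSum_taylorSeries_neg_log hzx).tsum_eq]
    simp_rw [mul_pow, div_mul_eq_mul_div]
  have habel := tendsto_map'_iff.1 (tendsto_tsum_powerSeries_nhdsWithin_lt hT)
  rwa [tendsto_nhds_unique (hlog.congr' hseries) habel]

end ClosedUnitDisc

end Complex

section TopologicalAddGroup

variable {G : Type*} [AddCommGroup G] [TopologicalSpace G] [IsTopologicalAddGroup G] {f : ℕ → G}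

theorem Filter.Tendsto.sum_range_add_nat {s : G}
    (h : Tendsto (fun n => ∑ i ∈ range n, f i) atTop (𝓝 s)) (k : ℕ) :
    Tendsto (fun n => ∑ i ∈ range n, f (i + k)) atTop (𝓝 (s - ∑ i ∈ range k, f i)) := by
  have hsplit (n : ℕ) :
      ∑ i ∈ range n, f (i + k) = ∑ i ∈ range (n + k), f i - ∑ i ∈ range k, f i := by
    rw [add_comm n, sum_range_add, add_sub_cancel_left]
    simp_rw [add_comm k]
  simpa only [hsplit] using ((tendsto_add_atTop_iff_nat k).2 h).sub_const _

theorem tendsto_sum_range_sub_add_nat (hf : Tendsto f atTop (𝓝 0)) (k : ℕ) :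
    Tendsto (fun n => ∑ i ∈ range n, (f i - f (i + k))) atTop
      (𝓝 (∑ i ∈ range k, f i)) := by
  have htelescope (n : ℕ) : ∑ i ∈ range n, (f i - f (i + k)) =
      ∑ i ∈ range k, f i - ∑ i ∈ range k, f (n + i) := by
    rw [sum_sub_distrib, sub_eq_sub_iff_add_eq_add, ← sum_range_add, add_comm n k, sum_range_add]
    simp_rw [add_comm k]
  have htail : Tendsto (fun n => ∑ i ∈ range k, f (n + i)) atTop (𝓝 0) := by
    simpa using tendsto_finsetSum (range k) fun i _ =>
      (hf.comp (tendsto_add_atTop_nat i)).congr fun n => by simp [add_comm]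
  simpa only [htelescope, sub_zero] using htail.const_sub (∑ i ∈ range k, f i)

end TopologicalAddGroup

namespace Real

theorem tendsto_sum_range_sin_mul_div {θ : ℝ} (hθ : θ ∈ Set.Ioo 0 (2 * π)) :
    Tendsto (fun n => ∑ i ∈ range n, sin (i * θ) / i) atTop (𝓝 ((π - θ) / 2)) := by
  have h := (Complex.continuous_im.tendsto _).comp
    (Complex.tendsto_sum_range_pow_div (Complex.norm_exp_ofReal_mul_I θ).le
      (Complex.exp_mul_I_ne_one hθ))
  convert h using 1
  · ext n
    simp only [Function.comp_apply, Complex.im_sum, Complex.div_natCast_im]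
    refine sum_congr rfl fun i _ => ?_
    rw [← Complex.exp_nat_mul, ← mul_assoc, ← Complex.ofReal_natCast, ← Complex.ofReal_mul,
      Complex.exp_ofReal_mul_I_im]
  · rw [Complex.neg_im, Complex.log_im, Complex.arg_one_sub_exp_mul_I hθ]
    congr 1
    ring

lemma neg_add_one_div_mul_sin_div_sin {x θ : ℝ} (hx : x ≠ 0) (hx2 : x + 2 ≠ 0)
    (hθ : sin θ ≠ 0) :
    -(x + 1) / (x * (x + 2)) * (sin ((x + 1) * θ) / sin θ) =
      -(cos θ / sin θ * (sin (x * θ) / x + sin ((x + 2) * θ) / (x + 2))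
        + (cos (x * θ) / x - cos ((x + 2) * θ) / (x + 2))) / 2 := by
  have hs₀ : sin (x * θ) = sin ((x + 1) * θ) * cos θ - cos ((x + 1) * θ) * sin θ := by
    rw [← sin_sub]; ring_nf
  have hs₂ : sin ((x + 2) * θ) = sin ((x + 1) * θ) * cos θ + cos ((x + 1) * θ) * sin θ := by
    rw [← sin_add]; ring_nf
  have hc₀ : cos (x * θ) = cos ((x + 1) * θ) * cos θ + sin ((x + 1) * θ) * sin θ := by
    rw [← cos_sub]; ring_nf
  have hc₂ : cos ((x + 2) * θ) = cos ((x + 1) * θ) * cos θ - sin ((x + 1) * θ) * sin θ := by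
    rw [← cos_add]; ring_nf
  rw [hs₀, hs₂, hc₀, hc₂]
  field_simp
  linear_combination (2 * x + 2) * sin ((x + 1) * θ) * sin_sq_add_cos_sq θ

lemma tendsto_cos_mul_div_natCast (θ : ℝ) :
    Tendsto (fun l : ℕ => cos (l * θ) / l) atTop (𝓝 0) := by
  refine squeeze_zero_norm (fun l => ?_) tendsto_one_div_atTop_nhds_zero_nat
  rw [norm_div, norm_natCast]
  exact div_le_div_of_nonneg_right (abs_cos_le_one _) (Nat.cast_nonneg l)

lemma sum_Icc_neg_add_one_div_mul_sin_div_sin {θ : ℝ} (hθ : sin θ ≠ 0) (N : ℕ) :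
    ∑ l ∈ Icc 1 N, -((l : ℝ) + 1) / (l * (l + 2)) * (sin ((l + 1) * θ) / sin θ) =
      -(cos θ / sin θ * (∑ i ∈ range N, sin (↑(i + 1) * θ) / ↑(i + 1)
          + ∑ i ∈ range N, sin (↑(i + 3) * θ) / ↑(i + 3))
        + ∑ i ∈ range N,
          (cos (↑(i + 1) * θ) / ↑(i + 1) - cos (↑(i + 3) * θ) / ↑(i + 3))) / 2 := by
  rw [← Ico_add_one_right_eq_Icc, sum_Ico_eq_sum_range, add_tsub_cancel_right,
    ← sum_add_distrib, mul_sum, ← sum_add_distrib, ← sum_neg_distrib, sum_div]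
  refine sum_congr rfl fun k _ => ?_
  rw [add_comm 1 k]
  push_cast
  rw [show (k : ℝ) + 3 = k + 1 + 2 by ring]
  exact neg_add_one_div_mul_sin_div_sin (by positivity) (by positivity) hθ

end Real

open Filter in
/-- For `θ ∈ (0,π)`, the partial sums
`∑_{l=1}^N (-(l+1)/(l(l+2))) sin((l+1)θ)/sin θ` converge, as `N → ∞`, to
`-(π - θ) cos θ/(2 sin θ) + 1/4`. -/
theorem stmt_9 (θ : ℝ) (hθ : θ ∈ Set.Ioo 0 Real.pi) :
    Tendsto (fun N : ℕ => ∑ l ∈ Finset.Icc 1 N,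
        (-((l : ℝ) + 1) / ((l : ℝ) * ((l : ℝ) + 2))) *
          (Real.sin (((l : ℝ) + 1) * θ) / Real.sin θ))
      atTop
      (nhds (-(Real.pi - θ) * Real.cos θ / (2 * Real.sin θ) + 1 / 4)) := by
  obtain ⟨hθ₀, hθπ⟩ := hθ
  have hsin : Real.sin θ ≠ 0 := (Real.sin_pos_of_pos_of_lt_pi hθ₀ hθπ).ne'
  have hsawtooth := Real.tendsto_sum_range_sin_mul_div ⟨hθ₀, by linarith [Real.pi_pos]⟩
  have hsines := ((hsawtooth.sum_range_add_nat 1).add (hsawtooth.sum_range_add_nat 3)).const_mul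
    (Real.cos θ / Real.sin θ)
  have hcosines := tendsto_sum_range_sub_add_nat
    ((Real.tendsto_cos_mul_div_natCast θ).comp (tendsto_add_atTop_nat 1)) 2
  convert ((hsines.add hcosines).neg.div_const 2).congr fun N =>
    (Real.sum_Icc_neg_add_one_div_mul_sin_div_sin hsin N).symm using 2
  simp only [Function.comp_apply, sum_range_succ, sum_range_zero]
  push_cast
  rw [Real.sin_two_mul, Real.cos_two_mul]
  field_simp
  ring
end

section
/- For every θ ∈ (0,π) with t = cos θ, the partial sums ∑_{l=0}^{N} (l+1)/(−3/4 − l(l+2)) · sin((l+1)θ)/sin θ converge as N → ∞ to (−1/(4√2)) · ((1 + t)/√(1 − t) + √(1 − t)) · π. -/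
/-!
Since `(l + 1) / (-3/4 - l (l + 2)) = -(1/(2l + 1) + 1/(2l + 3))`, summation by parts together with
`sin (kθ) + sin ((k + 1)θ) = 2 cos (θ/2) sin ((2k + 1)θ/2)` turns the `N`-th partial sum into
`-(2 cos (θ/2) / sin θ) ∑_{k ≤ N+1} sin ((2k + 1)θ/2) / (2k + 1)` plus a term of size `O(1/N)`.
For `0 < x < π` the series `∑ sin ((2k + 1)x) / (2k + 1)` converges by Dirichlet's test, and by
Abel's theorem its sum is the limit as `r → 1⁻` of
`∑ sin ((2k + 1)x) r^(2k + 1) / (2k + 1) = -Re (arctan (i r e^{ix}))`, namely `π/4`, because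
`(1 - e^{ix}) / (1 + e^{ix}) = -i tan (x/2)`. The limit `-π / (4 sin (θ/2))` is the closed form,
as `√(1 - cos θ) = √2 sin (θ/2)`.
-/

open Filter Finset Real
open scoped Topology

lemma abs_sum_range_sin_le {a : ℝ} (ha : sin (a / 2) ≠ 0) (b : ℝ) (n : ℕ) :
    |∑ i ∈ range n, sin (a * i + b)| ≤ |sin (a / 2)|⁻¹ := by
  rw [← one_div, le_div_iff₀' (abs_pos.2 ha), ← abs_mul, sin_mul_sum_sin, abs_mul]
  exact mul_le_one₀ (abs_sin_le_one _) (abs_nonneg _) (abs_sin_le_one _)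

lemma Antitone.cauchySeq_sum_range_mul_sin {f : ℕ → ℝ} (hf : Antitone f)
    (hf0 : Tendsto f atTop (𝓝 0)) {a : ℝ} (ha : sin (a / 2) ≠ 0) (b : ℝ) :
    CauchySeq fun n ↦ ∑ i ∈ range n, f i * sin (a * i + b) :=
  hf.cauchySeq_series_mul_of_tendsto_zero_of_bounded hf0 (abs_sum_range_sin_le ha b)

lemma antitone_inv_two_mul_add_one : Antitone fun k : ℕ ↦ (2 * (k : ℝ) + 1)⁻¹ :=
  fun _ _ h ↦ by dsimp only; gcongr

lemma tendsto_inv_two_mul_add_one_atTop :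
    Tendsto (fun k : ℕ ↦ (2 * (k : ℝ) + 1)⁻¹) atTop (𝓝 0) :=
  tendsto_atTop_add_const_right _ _
    (tendsto_natCast_atTop_atTop.const_mul_atTop zero_lt_two) |>.inv_tendsto_atTop

lemma exists_tendsto_sum_sin_odd_div {x : ℝ} (hx : sin x ≠ 0) :
    ∃ l, Tendsto (fun n ↦ ∑ k ∈ range n, sin ((2 * k + 1) * x) / (2 * k + 1)) atTop (𝓝 l) := by
  have hx' : sin (2 * x / 2) ≠ 0 := by rwa [mul_div_cancel_left₀ _ two_ne_zero]
  obtain ⟨l, hl⟩ := cauchySeq_tendsto_of_complete <|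
    antitone_inv_two_mul_add_one.cauchySeq_sum_range_mul_sin
      tendsto_inv_two_mul_add_one_atTop hx' x
  refine ⟨l, hl.congr fun n ↦ sum_congr rfl fun k _ ↦ ?_⟩
  rw [div_eq_inv_mul]; ring_nf

lemma eq_of_tendsto_sum_range_of_hasSum_mul_odd_pow {a : ℕ → ℝ} {l L : ℝ} {g : ℝ → ℝ}
    (hl : Tendsto (fun n ↦ ∑ i ∈ range n, a i) atTop (𝓝 l))
    (hg : ∀ r ∈ Set.Ioo (0 : ℝ) 1, HasSum (fun k ↦ a k * r ^ (2 * k + 1)) (g r))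
    (hgL : Tendsto g (𝓝[<] 1) (𝓝 L)) : l = L := by
  have hsq : Tendsto (fun r : ℝ ↦ r ^ 2) (𝓝[<] 1) (𝓝[<] 1) := by
    refine tendsto_nhdsWithin_of_tendsto_nhds_of_eventually_within _
      ((continuous_pow 2).tendsto' 1 1 (one_pow 2) |>.mono_left nhdsWithin_le_nhds) ?_
    filter_upwards [Ioo_mem_nhdsLT (show (0 : ℝ) < 1 from one_pos)] with r hr
    exact pow_lt_one₀ hr.1.le hr.2 two_ne_zero
  -- Abel's theorem in the variable `r ^ 2`, multiplied by `r`.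
  have habel := ((Real.tendsto_tsum_powerSeries_nhdsWithin_lt hl).comp hsq).mul
    (tendsto_id.mono_left (nhdsWithin_le_nhds (a := (1 : ℝ))))
  rw [mul_one] at habel
  refine tendsto_nhds_unique (habel.congr' ?_) hgL
  filter_upwards [Ioo_mem_nhdsLT (show (0 : ℝ) < 1 from one_pos)] with r hr
  rw [Function.comp_apply, ← tsum_mul_right, ← (hg r hr).tsum_eq]
  exact tsum_congr fun k ↦ by rw [← pow_mul, id, mul_assoc, ← pow_succ]

lemma Complex.arctan_I_mul (w : ℂ) :
    arctan (I * w) = -I / 2 * log ((1 - w) / (1 + w)) := by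
  rw [arctan, mul_right_comm, I_mul_I, neg_one_mul, sub_neg_eq_add, ← sub_eq_add_neg]

lemma one_sub_exp_div_one_add_exp (x : ℝ) :
    (1 - Complex.exp (x * Complex.I)) / (1 + Complex.exp (x * Complex.I)) =
      -Complex.I * (tan (x / 2) : ℂ) := by
  set c := Complex.cos (x / 2)
  set s := Complex.sin (x / 2)
  have hw : Complex.exp (x / 2 * Complex.I) = c + s * Complex.I := Complex.exp_mul_I _
  have hexp : Complex.exp (x * Complex.I) = (c + s * Complex.I) ^ 2 := by
    rw [← hw, ← Complex.exp_nat_mul]; ring_nf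
  have hs : s ^ 2 + c ^ 2 = 1 := Complex.sin_sq_add_cos_sq _
  have hnum : 1 - (c + s * Complex.I) ^ 2 = -Complex.I * s * (2 * (c + s * Complex.I)) := by
    linear_combination (-1 : ℂ) * hs + s ^ 2 * Complex.I_sq
  have hden : 1 + (c + s * Complex.I) ^ 2 = c * (2 * (c + s * Complex.I)) := by
    linear_combination (-1 : ℂ) * hs + s ^ 2 * Complex.I_sq
  have hw0 : 2 * (c + s * Complex.I) ≠ 0 := mul_ne_zero two_ne_zero (hw ▸ Complex.exp_ne_zero _)
  rw [Complex.ofReal_tan, Complex.ofReal_div, Complex.ofReal_ofNat, Complex.tan, hexp, hnum, hden,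
    mul_div_mul_right _ _ hw0, mul_div_assoc]

lemma hasSum_sin_odd_div_mul_pow (x : ℝ) {r : ℝ} (hr : |r| < 1) :
    HasSum (fun k : ℕ ↦ sin ((2 * k + 1) * x) / (2 * k + 1) * r ^ (2 * k + 1))
      (-(Complex.arctan (Complex.I * (r * Complex.exp (x * Complex.I)))).re) := by
  have hz : ‖Complex.I * (r * Complex.exp (x * Complex.I))‖ < 1 := by
    simpa [Complex.norm_exp_ofReal_mul_I] using hr
  refine (Complex.hasSum_re (Complex.hasSum_arctan hz)).neg.congr_fun fun k ↦ ?_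
  have hterm : (-1) ^ k * (Complex.I * (r * Complex.exp (x * Complex.I))) ^ (2 * k + 1) /
      ((2 * k + 1 : ℕ) : ℂ) = Complex.I * ((r ^ (2 * k + 1) / (2 * k + 1) : ℝ) : ℂ) *
        Complex.exp (((2 * k + 1) * x : ℝ) * Complex.I) := by
    rw [mul_pow, pow_succ Complex.I, pow_mul, Complex.I_sq, ← mul_assoc, ← mul_assoc, ← mul_pow,
      neg_one_mul, neg_neg, one_pow, one_mul, mul_pow, ← Complex.exp_nat_mul]
    push_cast
    rw [mul_assoc _ (x : ℂ)]
    ring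
  rw [hterm, mul_assoc]
  simp only [Complex.mul_re, Complex.I_re, Complex.I_im,
    Complex.exp_ofReal_mul_I_re, Complex.exp_ofReal_mul_I_im, Complex.im_ofReal_mul, zero_mul,
    one_mul, zero_sub, neg_neg]
  ring

lemma tendsto_neg_re_arctan_I_mul_ofReal_mul_exp {x : ℝ} (hx : x ∈ Set.Ioo 0 π) :
    Tendsto (fun r : ℝ ↦ -(Complex.arctan (Complex.I * (r * Complex.exp (x * Complex.I)))).re)
      (𝓝 1) (𝓝 (π / 4)) := by
  set e := Complex.exp (x * Complex.I)
  have htan : 0 < tan (x / 2) :=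
    tan_pos_of_pos_of_lt_pi_div_two (by linarith [hx.1]) (by linarith [hx.2])
  have hden : 1 + e ≠ 0 := fun h ↦ by
    -- `y / 0 = 0` in Lean, so the identity would force `tan (x / 2) = 0`.
    have := one_sub_exp_div_one_add_exp x
    rw [h, div_zero, eq_comm, mul_eq_zero, neg_eq_zero, Complex.ofReal_eq_zero] at this
    exact this.elim Complex.I_ne_zero htan.ne'
  have hslit : (1 - e) / (1 + e) ∈ Complex.slitPlane := by
    rw [one_sub_exp_div_one_add_exp, Complex.mem_slitPlane_iff]
    right
    rw [neg_mul, Complex.neg_im, Complex.I_mul_im, Complex.ofReal_re, neg_ne_zero]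
    exact htan.ne'
  have hvalue : -(-Complex.I / 2 * Complex.log ((1 - e) / (1 + e))).re = π / 4 := by
    rw [one_sub_exp_div_one_add_exp, mul_comm (-Complex.I), Complex.mul_re, Complex.log_im,
      Complex.arg_real_mul _ htan, Complex.arg_neg_I]
    simp only [neg_div, Complex.neg_re, Complex.neg_im, Complex.div_ofNat_re,
      Complex.div_ofNat_im, Complex.I_re, Complex.I_im, zero_div, neg_zero, zero_mul]
    ring
  have hw : Tendsto (fun r : ℝ ↦ (r : ℂ) * e) (𝓝 1) (𝓝 e) := by
    simpa using (Complex.continuous_ofReal.tendsto 1).mul_const e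
  simp_rw [Complex.arctan_I_mul, ← hvalue]
  exact ((Complex.continuous_re.tendsto _).comp
    ((((tendsto_const_nhds.sub hw).div (tendsto_const_nhds.add hw) hden).clog hslit).const_mul
      _)).neg

theorem tendsto_sum_sin_odd_div {x : ℝ} (hx : x ∈ Set.Ioo 0 π) :
    Tendsto (fun n ↦ ∑ k ∈ range n, sin ((2 * k + 1) * x) / (2 * k + 1)) atTop (𝓝 (π / 4)) := by
  obtain ⟨l, hl⟩ := exists_tendsto_sum_sin_odd_div (sin_pos_of_pos_of_lt_pi hx.1 hx.2).ne'
  have hlπ : l = π / 4 := eq_of_tendsto_sum_range_of_hasSum_mul_odd_pow hl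
    (fun r hr ↦ hasSum_sin_odd_div_mul_pow x (abs_lt.2 ⟨by linarith [hr.1], hr.2⟩))
    ((tendsto_neg_re_arctan_I_mul_ofReal_mul_exp hx).mono_left nhdsWithin_le_nhds)
  rwa [hlπ] at hl

lemma sum_range_add_succ_mul_succ {R : Type*} [CommRing R] (w f : ℕ → R) (hf : f 0 = 0) (n : ℕ) :
    ∑ l ∈ range n, (w l + w (l + 1)) * f (l + 1) =
      ∑ k ∈ range (n + 1), w k * (f k + f (k + 1)) - w n * f (n + 1) := by
  induction n with
  | zero => simp [hf]
  | succ n ih => rw [sum_range_succ, ih, sum_range_succ _ (n + 1)]; ring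

lemma add_one_div_neg_three_div_four_sub_mul_add_two {l : ℝ} (h₁ : 2 * l + 1 ≠ 0)
    (h₃ : 2 * (l + 1) + 1 ≠ 0) :
    (l + 1) / (-3 / 4 - l * (l + 2)) = -((2 * l + 1)⁻¹ + (2 * (l + 1) + 1)⁻¹) := by
  have hden : -3 / 4 - l * (l + 2) ≠ 0 := by
    rw [show -3 / 4 - l * (l + 2) = -((2 * l + 1) * (2 * (l + 1) + 1)) / 4 by ring]
    exact div_ne_zero (neg_ne_zero.2 (mul_ne_zero h₁ h₃)) four_ne_zero
  rw [inv_add_inv h₁ h₃, ← neg_div, div_eq_div_iff hden (mul_ne_zero h₁ h₃)]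
  ring

lemma sin_mul_add_sin_add_one_mul (k θ : ℝ) :
    sin (k * θ) + sin ((k + 1) * θ) = 2 * cos (θ / 2) * sin ((2 * k + 1) * (θ / 2)) := by
  rw [sin_add_sin, ← cos_neg]
  ring_nf

lemma sum_range_mul_sin_div_sin (θ : ℝ) (n : ℕ) :
    ∑ l ∈ range n, ((l : ℝ) + 1) / (-3 / 4 - l * (l + 2)) * (sin ((l + 1) * θ) / sin θ) =
      -(sin θ)⁻¹ * (2 * cos (θ / 2) *
        ∑ k ∈ range (n + 1), sin ((2 * k + 1) * (θ / 2)) / (2 * k + 1) -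
          (2 * (n : ℝ) + 1)⁻¹ * sin ((n + 1) * θ)) := by
  have h := sum_range_add_succ_mul_succ (fun k : ℕ ↦ (2 * (k : ℝ) + 1)⁻¹) (fun k : ℕ ↦ sin (k * θ))
    (by simp) n
  push_cast at h
  simp_rw [sin_mul_add_sin_add_one_mul] at h
  have hsum : 2 * cos (θ / 2) * ∑ k ∈ range (n + 1), sin ((2 * k + 1) * (θ / 2)) / (2 * k + 1) =
      ∑ k ∈ range (n + 1), (2 * (k : ℝ) + 1)⁻¹ * (2 * cos (θ / 2) * sin ((2 * k + 1) * (θ / 2))) := by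
    rw [mul_sum]
    exact sum_congr rfl fun k _ ↦ by ring
  rw [hsum, ← h, mul_sum]
  refine sum_congr rfl fun l _ ↦ ?_
  rw [add_one_div_neg_three_div_four_sub_mul_add_two (by positivity) (by positivity)]
  ring

lemma sqrt_one_sub_cos (x : ℝ) : √(1 - cos x) = √2 * |sin (x / 2)| := by
  rw [abs_sin_half, ← sqrt_mul zero_le_two]
  ring_nf

lemma inv_sin_mul_cos_half_eq {θ : ℝ} (hs : 0 < sin (θ / 2)) (hc : cos (θ / 2) ≠ 0) :
    (sin θ)⁻¹ * cos (θ / 2) = ((1 + cos θ) / √(1 - cos θ) + √(1 - cos θ)) / (2 * √2) := by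
  have hsin : sin θ = 2 * sin (θ / 2) * cos (θ / 2) := by rw [← sin_two_mul]; ring_nf
  have hcos : 1 + cos θ = 2 * cos (θ / 2) ^ 2 := by rw [cos_sq]; ring_nf
  rw [sqrt_one_sub_cos, abs_of_pos hs, hcos, hsin]
  field_simp
  rw [sq_sqrt zero_le_two]
  linear_combination (-2) * sin_sq_add_cos_sq (θ / 2)

open Filter in
/-- For `θ ∈ (0,π)`, `t = cos θ`, the partial sums
`∑_{l=0}^N (l+1)/(-3/4 - l(l+2)) sin((l+1)θ)/sin θ` converge, as `N → ∞`, to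
`(-1/(4√2))·((1 + t)/√(1 - t) + √(1 - t))·π`. -/
theorem stmt_16 (θ : ℝ) (hθ : θ ∈ Set.Ioo 0 Real.pi) (t : ℝ) (ht : t = Real.cos θ) :
    Tendsto (fun N : ℕ => ∑ l ∈ Finset.range (N + 1),
        ((l : ℝ) + 1) / (-3 / 4 - (l : ℝ) * ((l : ℝ) + 2)) *
          (Real.sin (((l : ℝ) + 1) * θ) / Real.sin θ))
      atTop
      (nhds (-1 / (4 * Real.sqrt 2) *
        ((1 + t) / Real.sqrt (1 - t) + Real.sqrt (1 - t)) * Real.pi)) := by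
  subst ht
  have hhalf : θ / 2 ∈ Set.Ioo 0 π := ⟨by linarith [hθ.1], by linarith [hθ.2, pi_pos]⟩
  have hc : 0 < cos (θ / 2) :=
    cos_pos_of_mem_Ioo ⟨by linarith [hhalf.1, pi_pos], by linarith [hθ.2]⟩
  have htail : Tendsto (fun n : ℕ ↦ (2 * (n : ℝ) + 1)⁻¹ * sin ((n + 1) * θ)) atTop (𝓝 0) :=
    tendsto_inv_two_mul_add_one_atTop.zero_mul_isBoundedUnder_le
      (isBoundedUnder_of ⟨1, fun _ ↦ abs_sin_le_one _⟩)
  have hlim := ((((tendsto_sum_sin_odd_div hhalf).comp (tendsto_add_atTop_nat 1)).const_mul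
    (2 * cos (θ / 2))).sub htail).const_mul (-(sin θ)⁻¹)
  have hvalue : -(sin θ)⁻¹ * (2 * cos (θ / 2) * (π / 4) - 0) =
      -1 / (4 * √2) * ((1 + cos θ) / √(1 - cos θ) + √(1 - cos θ)) * π := by
    linear_combination (-(π / 2)) *
      inv_sin_mul_cos_half_eq (sin_pos_of_pos_of_lt_pi hhalf.1 hhalf.2) hc.ne'
  rw [← hvalue]
  exact (hlim.congr fun n ↦ (sum_range_mul_sin_div_sin θ n).symm).comp (tendsto_add_atTop_nat 1)
end

section
/- Let κ < J be nonnegative integers and let 𝐭 > 0 be real. Then at every real R > 0, the function R ↦ 𝐭^{κ−J} · ∑_{ι=0}^{J−κ−1} C(J−κ−1,ι) · ((−1)^{J−κ−ι−1}/(2(J−ι)−1)) · (R²/(𝐭 + R²))^{J−ι−1/2} has derivative equal to R^{2κ}/(𝐭 + R²)^{J+1/2}. -/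
/-!
Write `A = 𝐭 + R²` and `m = J - κ - 1`. Since `(R²/A)' = 2R𝐭/A²`, the `ι`-th term differentiates to
`C(m,ι) (-1)^(m-ι) 𝐭 R^(2(J-ι-1)) / A^(J-ι+1/2)`. Factoring out `𝐭 R^(2κ) / A^(J+1/2)` leaves
`∑ C(m,ι) A^ι (-R²)^(m-ι) = (A - R²)^m = 𝐭^m`, which the prefactor `𝐭^(κ-J)` cancels.
-/

open Finset

theorem hasDerivAt_sq_div_add_sq {T R : ℝ} (hA : T + R ^ 2 ≠ 0) :
    HasDerivAt (fun x : ℝ => x ^ 2 / (T + x ^ 2)) (2 * R * T / (T + R ^ 2) ^ 2) R := by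
  have hsq : HasDerivAt (fun x : ℝ => x ^ 2) (2 * R) R := by
    simpa using hasDerivAt_pow 2 R
  refine (hsq.div (hsq.const_add T) hA).congr_deriv ?_
  field_simp
  ring

theorem mul_sq_div_rpow_natCast_sub_half {R A : ℝ} (hR : 0 < R) (hA : 0 < A) (n : ℕ) :
    R * (R ^ 2 / A) ^ ((n : ℝ) - 1 / 2) = R ^ (2 * n) * √A / A ^ n := by
  have hsqrt : (R ^ 2 / A) ^ (1 / 2 : ℝ) = R / √A := by
    rw [← Real.sqrt_eq_rpow, Real.sqrt_div' _ hA.le, Real.sqrt_sq hR.le]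
  have hsA : 0 < √A := Real.sqrt_pos.2 hA
  rw [Real.rpow_sub (by positivity), Real.rpow_natCast, hsqrt, div_pow, pow_mul]
  field_simp

theorem hasDerivAt_sq_div_add_sq_rpow {T R : ℝ} (hA : 0 < T + R ^ 2) (hR : 0 < R) (n : ℕ) :
    HasDerivAt (fun x : ℝ => (x ^ 2 / (T + x ^ 2)) ^ ((n : ℝ) + 1 / 2))
      ((2 * n + 1) * T * R ^ (2 * n) / ((T + R ^ 2) ^ (n + 1) * √(T + R ^ 2))) R := by
  have hu : R ^ 2 / (T + R ^ 2) ≠ 0 := by positivity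
  refine ((hasDerivAt_sq_div_add_sq hA.ne').rpow_const (Or.inl hu)).congr_deriv ?_
  have hsA : 0 < √(T + R ^ 2) := Real.sqrt_pos.2 hA
  have hsq : √(T + R ^ 2) ^ 2 = T + R ^ 2 := Real.sq_sqrt hA.le
  rw [show (n : ℝ) + 1 / 2 - 1 = n - 1 / 2 by ring]
  have key := mul_sq_div_rpow_natCast_sub_half hR hA n
  calc 2 * R * T / (T + R ^ 2) ^ 2 * ((n : ℝ) + 1 / 2) * (R ^ 2 / (T + R ^ 2)) ^ ((n : ℝ) - 1 / 2)
      = (2 * n + 1) * T / (T + R ^ 2) ^ 2 * (R * (R ^ 2 / (T + R ^ 2)) ^ ((n : ℝ) - 1 / 2)) := by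
        ring
    _ = _ := by
      rw [key]
      field_simp
      rw [hsq]
      ring

theorem hasDerivAt_sum_choose_sq_div_add_sq_rpow {T R : ℝ} (hA : 0 < T + R ^ 2) (hR : 0 < R)
    (κ m : ℕ) :
    HasDerivAt (fun x : ℝ => ∑ ι ∈ range (m + 1), (m.choose ι : ℝ) *
        ((-1) ^ (m - ι) / (2 * ((κ + (m - ι) : ℕ) : ℝ) + 1)) *
          (x ^ 2 / (T + x ^ 2)) ^ (((κ + (m - ι) : ℕ) : ℝ) + 1 / 2))
      (T ^ (m + 1) * R ^ (2 * κ) / ((T + R ^ 2) ^ (κ + m + 1) * √(T + R ^ 2))) R := by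
  have hsA : 0 < √(T + R ^ 2) := Real.sqrt_pos.2 hA
  refine (HasDerivAt.fun_sum fun ι _ =>
    (hasDerivAt_sq_div_add_sq_rpow hA hR (κ + (m - ι))).const_mul
      ((m.choose ι : ℝ) * ((-1) ^ (m - ι) / (2 * ((κ + (m - ι) : ℕ) : ℝ) + 1)))).congr_deriv ?_
  have hterm : ∀ ι ∈ range (m + 1),
      (m.choose ι : ℝ) * ((-1) ^ (m - ι) / (2 * ((κ + (m - ι) : ℕ) : ℝ) + 1)) *
        ((2 * ((κ + (m - ι) : ℕ) : ℝ) + 1) * T * R ^ (2 * (κ + (m - ι))) /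
          ((T + R ^ 2) ^ (κ + (m - ι) + 1) * √(T + R ^ 2)))
      = T * R ^ (2 * κ) / ((T + R ^ 2) ^ (κ + m + 1) * √(T + R ^ 2)) *
          ((T + R ^ 2) ^ ι * (-R ^ 2) ^ (m - ι) * m.choose ι) := by
    intro ι hι
    have hιm : ι ≤ m := Nat.lt_succ_iff.1 (mem_range.1 hι)
    rw [show κ + m + 1 = κ + (m - ι) + 1 + ι by omega, pow_add _ (κ + (m - ι) + 1), mul_add,
      pow_add, pow_mul R 2 (m - ι), neg_pow (R ^ 2)]
    field_simp
  rw [sum_congr rfl hterm, ← mul_sum, ← add_pow, add_neg_cancel_right]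
  ring

/-- For nonnegative integers `κ < J`, a real `𝐭 > 0`, and every real
`R > 0`, the function
`R ↦ 𝐭^{κ-J}·∑_{ι=0}^{J-κ-1} C(J-κ-1,ι)·((-1)^{J-κ-ι-1}/(2(J-ι)-1))·(R²/(𝐭+R²))^{J-ι-1/2}`
has derivative `R^{2κ}/(𝐭+R²)^{J+1/2}` at `R`. -/
theorem stmt_18 (κ J : ℕ) (hκJ : κ < J) (T : ℝ) (hT : 0 < T) (R : ℝ) (hR : 0 < R) :
    HasDerivAt (fun R : ℝ =>
        T ^ ((κ : ℤ) - (J : ℤ)) *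
          ∑ ι ∈ Finset.range (J - κ),
            ((J - κ - 1).choose ι : ℝ) *
              ((-1 : ℝ) ^ (J - κ - ι - 1) / (2 * ((J : ℝ) - (ι : ℝ)) - 1)) *
                (R ^ 2 / (T + R ^ 2)) ^ ((J : ℝ) - (ι : ℝ) - 1/2))
      (R ^ (2 * κ) / (T + R ^ 2) ^ ((J : ℝ) + 1/2)) R := by
  obtain ⟨m, rfl⟩ : ∃ m, J = κ + m + 1 := ⟨J - κ - 1, by omega⟩
  have hA : 0 < T + R ^ 2 := by positivity
  have hpow : T ^ ((κ : ℤ) - ((κ + m + 1 : ℕ) : ℤ)) * T ^ (m + 1) = 1 := by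
    rw [← zpow_natCast, ← zpow_add₀ hT.ne']
    push_cast
    ring_nf
    exact zpow_zero T
  refine (((hasDerivAt_sum_choose_sq_div_add_sq_rpow hA hR κ m).const_mul
    (T ^ ((κ : ℤ) - ((κ + m + 1 : ℕ) : ℤ)))).congr_deriv ?_).congr_of_eventuallyEq
    (.of_forall fun x => ?_)
  · rw [Real.rpow_add hA, Real.rpow_natCast, ← Real.sqrt_eq_rpow, ← mul_div_assoc, ← mul_assoc,
      hpow, one_mul]
  · dsimp only
    rw [show κ + m + 1 - κ = m + 1 by omega, show m + 1 - 1 = m by omega]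
    congr 1
    refine sum_congr rfl fun ι hι => ?_
    have hιm : ι ≤ m := Nat.lt_succ_iff.1 (mem_range.1 hι)
    rw [show m + 1 - ι - 1 = m - ι by omega]
    push_cast [Nat.cast_sub hιm]
    ring_nf
end

section
/- Let m be a nonnegative integer, λ = m + 1/2, and t ∈ (-1,1); write 𝐭 = 1 − t² and, for r ∈ (0,1), 𝐫 = r − t, so that 𝐭 + 𝐫² = 1 − 2tr + r². Define rational numbers Q_0, …, Q_{m−1} (depending on 𝐭 and λ) by 1 = 2(λ−1)Q_0, 0 = 2(λ−2)Q_1 − [(2λ−3) + 2(λ−1)𝐭]Q_0, and 0 = 2(λ−j−1)Q_j − [(2λ−2j−1) + 2(λ−j)𝐭]Q_{j−1} + (2λ−2j+1)𝐭 Q_{j−2} for j = 2,…,m−1. Then at every r ∈ (0,1), the function r ↦ 1/(λ(𝐭+𝐫²)^λ) + (1/2)∑_{j=1}^{m} 1/((λ−j)(𝐭+𝐫²)^{λ−j}) + ∑_{j=1}^{m} t·Q_{j−1}·𝐫/(𝐭^j (𝐭+𝐫²)^{λ−j}) − log(𝐭 − t𝐫 + √(𝐭+𝐫²)) has derivative equal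 to (1 − r²)/(r(1 − 2tr + r²)^{λ+1}) − 1/r, where the sums over j are empty when m = 0. -/
/-!
Apart from the logarithm, every term is a multiple of a power `U ^ (j - λ)` of `U = 𝐭 + 𝐫²`,
so its derivative is `U ^ (-λ - 1)` times a polynomial in `U`; the logarithm contributes
`1/r - 1/(r √U)`, and `1/√U = U ^ (m + 1) · U ^ (-λ - 1)` because `λ = m + 1/2`.
The second-order recursion for `Q` has the first integral
`2(λ-i-2) Q_{i+1} - (2λ-2i-3) Q_i = 𝐭^(i+1)`, with which the `Q`-terms telescope to
`∑_{j=1}^m U^j`; the boundary term carries the factor `2m + 1 - 2λ = 0`.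
The geometric sum `(U - 1) ∑_{j=1}^m U^j = U^(m+1) - U` and `U - 1 = r (r - 2t)` then
collapse everything to `(1 - r²)/(r U^(λ+1)) - 1/r`.
-/

open Finset Topology

lemma HasDerivAt.div_rpow_const {f g : ℝ → ℝ} {f' g' x : ℝ} (hg : HasDerivAt g g' x)
    (hf : HasDerivAt f f' x) (hx : 0 < f x) (c : ℝ) :
    HasDerivAt (fun y => g y / f y ^ c) ((g' * f x - c * g x * f') * f x ^ (-c - 1)) x := by
  have hpos : ∀ᶠ y in 𝓝 x, 0 < f y := hf.continuousAt.eventually (lt_mem_nhds hx)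
  have hsplit : f x ^ (-c) = f x * f x ^ (-c - 1) := by
    conv_lhs => rw [show -c = 1 + (-c - 1) by ring, Real.rpow_add hx, Real.rpow_one]
  have hprod := hg.fun_mul (hf.rpow_const (p := -c) (Or.inl hx.ne'))
  refine (hprod.congr_of_eventuallyEq ?_).congr_deriv ?_
  · filter_upwards [hpos] with y hy
    rw [Real.rpow_neg hy.le, div_eq_mul_inv]
  · rw [hsplit]; ring

lemma hasDerivAt_add_sub_sq (T t r : ℝ) :
    HasDerivAt (fun y => T + (y - t) ^ 2) (2 * (r - t)) r := by
  simpa using (((hasDerivAt_id r).sub_const t).pow 2).const_add T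

lemma hasDerivAt_rpow_terms {m : ℕ} {lam T t r : ℝ} (Q : ℕ → ℝ) (hU : 0 < T + (r - t) ^ 2)
    (hlam : ∀ j ≤ m, lam - j ≠ 0) :
    HasDerivAt (fun y => 1 / lam / (T + (y - t) ^ 2) ^ lam
        + 1 / 2 * ∑ j ∈ Icc 1 m, 1 / (lam - j) / (T + (y - t) ^ 2) ^ (lam - j)
        + ∑ j ∈ Icc 1 m, t * Q (j - 1) * (y - t) / T ^ j / (T + (y - t) ^ 2) ^ (lam - j))
      ((-(2 * (r - t)) * (1 + 1 / 2 * ∑ j ∈ Icc 1 m, (T + (r - t) ^ 2) ^ j)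
        + t * ∑ j ∈ Icc 1 m, Q (j - 1) / T ^ j * (T + (r - t) ^ 2 - 2 * (lam - j) * (r - t) ^ 2)
            * (T + (r - t) ^ 2) ^ j) * (T + (r - t) ^ 2) ^ (-lam - 1)) r := by
  have hu := hasDerivAt_add_sub_sq T t r
  have hshift (j : ℕ) : (T + (r - t) ^ 2) ^ (-(lam - j) - 1)
      = (T + (r - t) ^ 2) ^ j * (T + (r - t) ^ 2) ^ (-lam - 1) := by
    rw [show -(lam - j) - 1 = (j : ℝ) + (-lam - 1) by ring, Real.rpow_add hU, Real.rpow_natCast]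
  have h0 : HasDerivAt (fun y => 1 / lam / (T + (y - t) ^ 2) ^ lam)
      (-(2 * (r - t)) * (T + (r - t) ^ 2) ^ (-lam - 1)) r := by
    refine ((hasDerivAt_const r (1 / lam)).div_rpow_const hu hU lam).congr_deriv ?_
    have := hlam 0 (Nat.zero_le m)
    simp only [Nat.cast_zero, sub_zero] at this
    field_simp
    ring
  have hpow : ∀ j ∈ Icc 1 m, HasDerivAt (fun y => 1 / (lam - j) / (T + (y - t) ^ 2) ^ (lam - j))
      (-(2 * (r - t)) * (T + (r - t) ^ 2) ^ j * (T + (r - t) ^ 2) ^ (-lam - 1)) r := by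
    intro j hj
    refine ((hasDerivAt_const r (1 / (lam - j))).div_rpow_const hu hU _).congr_deriv ?_
    have := hlam j (mem_Icc.mp hj).2
    rw [hshift]
    field_simp
    ring
  have hmul : ∀ j ∈ Icc 1 m,
      HasDerivAt (fun y => t * Q (j - 1) * (y - t) / T ^ j / (T + (y - t) ^ 2) ^ (lam - j))
        (t * (Q (j - 1) / T ^ j * (T + (r - t) ^ 2 - 2 * (lam - j) * (r - t) ^ 2)
          * (T + (r - t) ^ 2) ^ j) * (T + (r - t) ^ 2) ^ (-lam - 1)) r := by
    intro j _
    have hg := (((hasDerivAt_id r).sub_const t).const_mul (t * Q (j - 1))).div_const (T ^ j)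
    refine (hg.div_rpow_const hu hU _).congr_deriv ?_
    rw [hshift]
    simp only [id_eq]
    ring
  refine ((h0.add ((HasDerivAt.fun_sum hpow).const_mul (1 / 2))).add
    (HasDerivAt.fun_sum hmul)).congr_deriv ?_
  simp only [← sum_mul, ← mul_sum]
  ring

lemma hasDerivAt_log_sub_mul_add_sqrt {t T r : ℝ} (hT : T = 1 - t ^ 2) (hT0 : 0 < T)
    (hr : r ≠ 0) :
    HasDerivAt (fun y => Real.log (T - t * (y - t) + √(T + (y - t) ^ 2)))
      (1 / r - 1 / (r * √(T + (r - t) ^ 2))) r := by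
  have hU : 0 < T + (r - t) ^ 2 := by positivity
  set S := √(T + (r - t) ^ 2) with hS
  have hS2 : S ^ 2 = T + (r - t) ^ 2 := Real.sq_sqrt hU.le
  have hS0 : 0 < S := Real.sqrt_pos.mpr hU
  -- `S² = (1 - t r)² + r² 𝐭`, so `S > |1 - t r|`
  have hlt : (T - t * (r - t)) ^ 2 < S ^ 2 := by
    rw [hS2]; nlinarith [mul_pos (pow_pos (abs_pos.mpr hr) 2) hT0, sq_abs r]
  have hpos : 0 < T - t * (r - t) + S := by linarith [(abs_lt_of_sq_lt_sq' hlt hS0.le).1]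
  have hsum := (((hasDerivAt_id r).sub_const t).const_mul t).const_sub T |>.add
    ((hasDerivAt_add_sub_sq T t r).sqrt hU.ne')
  refine (hsum.log hpos.ne').congr_deriv ?_
  simp only [Pi.add_apply, id_eq, ← hS]
  field_simp
  rw [hT] at hS2 ⊢
  linear_combination (-1) * hS2

lemma add_half_sub_natCast_ne_zero (m j : ℕ) : (m : ℝ) + 1 / 2 - j ≠ 0 := by
  intro h
  have h2 : ((2 * m + 1 : ℕ) : ℝ) = (2 * j : ℕ) := by push_cast; linarith
  have := Nat.cast_injective h2
  omega

section Recurrence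

variable {m : ℕ} {lam T : ℝ} {Q : ℕ → ℝ}

lemma first_order_recurrence (hQ0 : 0 < m → 1 = 2 * (lam - 1) * Q 0)
    (hQ1 : 1 < m → 0 = 2 * (lam - 2) * Q 1 - ((2 * lam - 3) + 2 * (lam - 1) * T) * Q 0)
    (hQrec : ∀ j : ℕ, 2 ≤ j → j < m →
      0 = 2 * (lam - (j : ℝ) - 1) * Q j
        - ((2 * lam - 2 * (j : ℝ) - 1) + 2 * (lam - (j : ℝ)) * T) * Q (j - 1)
        + (2 * lam - 2 * (j : ℝ) + 1) * T * Q (j - 2)) :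
    ∀ i : ℕ, i + 1 < m →
      2 * (lam - i - 2) * Q (i + 1) - (2 * lam - 2 * i - 3) * Q i = T ^ (i + 1) := by
  intro i
  induction i with
  | zero =>
    intro hm
    simp only [Nat.cast_zero, zero_add]
    linear_combination -hQ1 hm - T * hQ0 (by omega)
  | succ k ih =>
    intro hm
    have hrec := hQrec (k + 2) (by omega) hm
    simp only [Nat.add_sub_cancel, Nat.reduceSubDiff] at hrec
    push_cast at hrec ⊢
    linear_combination -hrec + T * ih (by omega)

lemma sum_Icc_telescope (hT : T ≠ 0) (s : ℝ) (hQ0 : 2 * (lam - 1) * Q 0 = 1) (n : ℕ)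
    (hres : ∀ i < n, 2 * (lam - i - 2) * Q (i + 1) - (2 * lam - 2 * i - 3) * Q i = T ^ (i + 1)) :
    ∑ j ∈ Icc 1 (n + 1), Q (j - 1) / T ^ j * (T + s - 2 * (lam - j) * s) * (T + s) ^ j
      = ∑ j ∈ Icc 1 (n + 1), (T + s) ^ j
        + (2 * n + 3 - 2 * lam) * Q n * (T + s) ^ (n + 2) / T ^ (n + 1) := by
  induction n with
  | zero =>
    simp only [zero_add, Icc_self, sum_singleton, Nat.sub_self]
    field_simp
    linear_combination (T * (T + s)) * hQ0
  | succ n ih =>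
    rw [sum_Icc_succ_top (b := n + 1) (by omega), ih fun i hi => hres i (by omega),
      sum_Icc_succ_top (b := n + 1) (by omega)]
    have hn := hres n (by omega)
    simp only [Nat.add_sub_cancel, pow_succ T (n + 1)]
    push_cast
    field_simp
    linear_combination (T * (T + s) ^ (n + 2)) * hn

lemma sum_Icc_eq_sum_pow (hlam : lam = (m : ℝ) + 1/2) (hT : T ≠ 0) (s : ℝ)
    (hQ0 : 0 < m → 1 = 2 * (lam - 1) * Q 0)
    (hres : ∀ i : ℕ, i + 1 < m →
      2 * (lam - i - 2) * Q (i + 1) - (2 * lam - 2 * i - 3) * Q i = T ^ (i + 1)) :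
    ∑ j ∈ Icc 1 m, Q (j - 1) / T ^ j * (T + s - 2 * (lam - j) * s) * (T + s) ^ j
      = ∑ j ∈ Icc 1 m, (T + s) ^ j := by
  obtain _ | n := m
  · simp
  · rw [sum_Icc_telescope hT s (hQ0 (by omega)).symm n fun i hi => hres i (by omega), hlam]
    push_cast
    ring

end Recurrence

/-- Let `m : ℕ`, `λ = m + 1/2`, `t ∈ (-1,1)`, `𝐭 = 1 - t²`, and for
`r ∈ (0,1)` write `𝐫 = r - t` (so `𝐭 + 𝐫² = 1 - 2tr + r²`). Let `Q 0, …, Q (m-1)` be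
given by the recursion `1 = 2(λ-1)Q₀`, `0 = 2(λ-2)Q₁ - [(2λ-3) + 2(λ-1)𝐭]Q₀`, and
`0 = 2(λ-j-1)Q_j - [(2λ-2j-1) + 2(λ-j)𝐭]Q_{j-1} + (2λ-2j+1)𝐭 Q_{j-2}` for
`2 ≤ j ≤ m-1`. Then at every `r ∈ (0,1)` the function
`r ↦ 1/(λ(𝐭+𝐫²)^λ) + (1/2)∑_{j=1}^{m} 1/((λ-j)(𝐭+𝐫²)^{λ-j})
   + ∑_{j=1}^{m} t·Q_{j-1}·𝐫/(𝐭^j (𝐭+𝐫²)^{λ-j}) - log(𝐭 - t𝐫 + √(𝐭+𝐫²))`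
has derivative `(1 - r²)/(r(1 - 2tr + r²)^{λ+1}) - 1/r`. -/
theorem stmt_19 (m : ℕ) (lam : ℝ) (hlam : lam = (m : ℝ) + 1/2)
    (t : ℝ) (ht : t ∈ Set.Ioo (-1:ℝ) 1) (T : ℝ) (hT : T = 1 - t ^ 2)
    (Q : ℕ → ℝ)
    (hQ0 : 0 < m → 1 = 2 * (lam - 1) * Q 0)
    (hQ1 : 1 < m → 0 = 2 * (lam - 2) * Q 1 - ((2 * lam - 3) + 2 * (lam - 1) * T) * Q 0)
    (hQrec : ∀ j : ℕ, 2 ≤ j → j < m →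
      0 = 2 * (lam - (j : ℝ) - 1) * Q j
        - ((2 * lam - 2 * (j : ℝ) - 1) + 2 * (lam - (j : ℝ)) * T) * Q (j - 1)
        + (2 * lam - 2 * (j : ℝ) + 1) * T * Q (j - 2))
    (r : ℝ) (hr : r ∈ Set.Ioo (0:ℝ) 1) :
    HasDerivAt (fun r : ℝ =>
        1 / (lam * (T + (r - t) ^ 2) ^ lam)
          + 1/2 * ∑ j ∈ Finset.Icc 1 m,
              1 / ((lam - (j : ℝ)) * (T + (r - t) ^ 2) ^ (lam - (j : ℝ)))
          + ∑ j ∈ Finset.Icc 1 m,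
              t * Q (j - 1) * (r - t) / (T ^ j * (T + (r - t) ^ 2) ^ (lam - (j : ℝ)))
          - Real.log (T - t * (r - t) + Real.sqrt (T + (r - t) ^ 2)))
      ((1 - r ^ 2) / (r * (1 - 2 * t * r + r ^ 2) ^ (lam + 1)) - 1 / r) r := by
  have hT0 : 0 < T := by rw [hT]; nlinarith [ht.1, ht.2]
  have hU : 0 < T + (r - t) ^ 2 := by positivity
  have H := (hasDerivAt_rpow_terms (m := m) Q hU
    fun j _ => hlam ▸ add_half_sub_natCast_ne_zero m j).sub
    (hasDerivAt_log_sub_mul_add_sqrt hT hT0 hr.1.ne')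
  simp only [div_mul_eq_div_div]
  refine H.congr_deriv ?_
  rw [sum_Icc_eq_sum_pow hlam hT0.ne' _ hQ0 (first_order_recurrence hQ0 hQ1 hQrec)]
  set U := T + (r - t) ^ 2 with hU_def
  have hgeo : (U - 1) * ∑ j ∈ Icc 1 m, U ^ j = U ^ (m + 1) - U := by
    rw [← Ico_add_one_right_eq_Icc, mul_comm, geom_sum_Ico_mul U (by omega), pow_one]
  have hUr : 1 - 2 * t * r + r ^ 2 = U := by rw [hU_def, hT]; ring
  have hrpow : 1 / U ^ (lam + 1) = U ^ (-lam - 1) := by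
    rw [one_div, ← Real.rpow_neg hU.le, neg_add']
  have hsqrt : 1 / √U = U ^ (m + 1) * U ^ (-lam - 1) := by
    rw [Real.sqrt_eq_rpow, ← Real.rpow_natCast, ← Real.rpow_add hU, one_div,
      ← Real.rpow_neg hU.le, hlam]
    push_cast
    ring_nf
  rw [hUr, div_eq_mul_one_div _ (U ^ _), hrpow, ← one_div_mul_one_div r, hsqrt]
  have hr0 : r ≠ 0 := hr.1.ne'
  clear_value U
  field_simp
  linear_combination (-U ^ (-lam - 1)) * hgeo
    - (U ^ (-lam - 1) * (1 + ∑ j ∈ Icc 1 m, U ^ j)) * hUr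
end
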